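/- arXiv:1003.0611 — 14 statements merged into one kernel-verified Lean document; each statement's English description precedes it below -/
import Mathlib

section
/- Let X, Y, W : ℕ → ℤ be sequences (indexed by n ≥ 1) with X₁ = Y₁ = W₁ = 0 and, for all n ≥ 2, X_n = W_{n-1} + 2^(n-2), Y_n = X_{n-1}, W_n = Y_{n-1}. Then for all n ≥ 1: X_n equals (2^(n+1) − 2)/7 if n ≡ 0 (mod 3), (2^(n+1) − 4)/7 if n ≡ 1 (mod 3), and (2^(n+1) − 1)/7 if n ≡ 2 (mod 3); Y_n equals (2^n − 1)/7, (2^n − 2)/7, (2^n − 4)/7 in the respective cases; and W_n equals (2^(n-1) − 4)/7, (2^(n-1) − 1)/7, (2^(n-1) − 2)/7 in the respective cases. -/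
private lemma grig_aux (X Y W : ℕ → ℤ)
    (hX1 : X 1 = 0) (hY1 : Y 1 = 0) (hW1 : W 1 = 0)
    (hX : ∀ n : ℕ, 2 ≤ n → X n = W (n - 1) + 2 ^ (n - 2))
    (hY : ∀ n : ℕ, 2 ≤ n → Y n = X (n - 1))
    (hW : ∀ n : ℕ, 2 ≤ n → W n = Y (n - 1)) :
    ∀ n : ℕ, 1 ≤ n →
      (n % 3 = 0 →
        7 * X n = 2 ^ (n + 1) - 2 ∧ 7 * Y n = 2 ^ n - 1 ∧
          7 * W n = 2 ^ (n - 1) - 4) ∧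
      (n % 3 = 1 →
        7 * X n = 2 ^ (n + 1) - 4 ∧ 7 * Y n = 2 ^ n - 2 ∧
          7 * W n = 2 ^ (n - 1) - 1) ∧
      (n % 3 = 2 →
        7 * X n = 2 ^ (n + 1) - 1 ∧ 7 * Y n = 2 ^ n - 4 ∧
          7 * W n = 2 ^ (n - 1) - 2) := by
  intro n hn
  induction n, hn using Nat.le_induction with
  | base =>
    refine ⟨fun h => absurd h (by norm_num), fun _ => ?_, fun h => absurd h (by norm_num)⟩
    norm_num [hX1, hY1, hW1]
  | succ n hn ih =>
    obtain ⟨i0, i1, i2⟩ := ih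
    have hXr := hX (n + 1) (by omega)
    have hYr := hY (n + 1) (by omega)
    have hWr := hW (n + 1) (by omega)
    simp only [Nat.add_sub_cancel] at hXr hYr hWr
    rw [show n + 1 - 2 = n - 1 by omega] at hXr
    have p1 : (2 : ℤ) ^ n = 2 * 2 ^ (n - 1) := by
      conv_lhs => rw [show n = (n - 1) + 1 by omega]
      ring
    have p2 : (2 : ℤ) ^ (n + 1) = 4 * 2 ^ (n - 1) := by
      rw [show n + 1 = (n - 1) + 2 by omega]; ring
    have p3 : (2 : ℤ) ^ (n + 1 + 1) = 8 * 2 ^ (n - 1) := by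
      rw [show n + 1 + 1 = (n - 1) + 3 by omega]; ring
    simp only [Nat.add_sub_cancel]
    rcases (show n % 3 = 0 ∨ n % 3 = 1 ∨ n % 3 = 2 by omega) with h | h | h
    · obtain ⟨a, b, c⟩ := i0 h
      rw [p2] at a; rw [p1] at b
      refine ⟨fun hh => absurd hh (by omega), fun _ => ⟨?_, ?_, ?_⟩,
        fun hh => absurd hh (by omega)⟩
      · rw [p3, hXr]; linarith
      · rw [p2, hYr]; linarith
      · rw [p1, hWr]; linarith
    · obtain ⟨a, b, c⟩ := i1 h
      rw [p2] at a; rw [p1] at b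
      refine ⟨fun hh => absurd hh (by omega), fun hh => absurd hh (by omega),
        fun _ => ⟨?_, ?_, ?_⟩⟩
      · rw [p3, hXr]; linarith
      · rw [p2, hYr]; linarith
      · rw [p1, hWr]; linarith
    · obtain ⟨a, b, c⟩ := i2 h
      rw [p2] at a; rw [p1] at b
      refine ⟨fun _ => ⟨?_, ?_, ?_⟩, fun hh => absurd hh (by omega),
        fun hh => absurd hh (by omega)⟩
      · rw [p3, hXr]; linarith
      · rw [p2, hYr]; linarith
      · rw [p1, hWr]; linarith

theorem grigorchuk_two_cycle_counts (X Y W : ℕ → ℤ)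
    (hX1 : X 1 = 0) (hY1 : Y 1 = 0) (hW1 : W 1 = 0)
    (hX : ∀ n : ℕ, 2 ≤ n → X n = W (n - 1) + 2 ^ (n - 2))
    (hY : ∀ n : ℕ, 2 ≤ n → Y n = X (n - 1))
    (hW : ∀ n : ℕ, 2 ≤ n → W n = Y (n - 1)) :
    ∀ n : ℕ, 1 ≤ n →
      (n % 3 = 0 →
        X n = (2 ^ (n + 1) - 2) / 7 ∧ Y n = (2 ^ n - 1) / 7 ∧
          W n = (2 ^ (n - 1) - 4) / 7) ∧
      (n % 3 = 1 →
        X n = (2 ^ (n + 1) - 4) / 7 ∧ Y n = (2 ^ n - 2) / 7 ∧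
          W n = (2 ^ (n - 1) - 1) / 7) ∧
      (n % 3 = 2 →
        X n = (2 ^ (n + 1) - 1) / 7 ∧ Y n = (2 ^ n - 4) / 7 ∧
          W n = (2 ^ (n - 1) - 2) / 7) := by
  intro n hn
  obtain ⟨a0, a1, a2⟩ := grig_aux X Y W hX1 hY1 hW1 hX hY hW n hn
  have conv : ∀ t s : ℤ, 7 * t = s → t = s / 7 := by
    intro t s h
    rw [← h]
    exact (Int.mul_ediv_cancel_left _ (by norm_num)).symm
  refine ⟨fun h => ?_, fun h => ?_, fun h => ?_⟩
  · obtain ⟨a, b, c⟩ := a0 h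
    exact ⟨conv _ _ a, conv _ _ b, conv _ _ c⟩
  · obtain ⟨a, b, c⟩ := a1 h
    exact ⟨conv _ _ a, conv _ _ b, conv _ _ c⟩
  · obtain ⟨a, b, c⟩ := a2 h
    exact ⟨conv _ _ a, conv _ _ b, conv _ _ c⟩
end

section
/- Let n ≥ 4 be even and define the real polynomial Γ(a) = ∏_{k=1}^{n/2−1} (1 + a^(2^k))^(2^(n−2k−1)) · (1 + a^(2^(n/2))). Then Γ'(1)/Γ(1) = 2^(n−2) and Γ''(1)/Γ(1) + Γ'(1)/Γ(1) − (Γ'(1)/Γ(1))² = (n+2)·2^(n−4). Similarly, let n ≥ 5 be odd and define Γ(a) = ∏_{k=1}^{(n−1)/2−1} (1 + a^(2^k))^(2^(n−2k−1)) · (1 + a^(2^((n−1)/2)))². Then Γ'(1)/Γ(1) = 2^(n−2) and Γ''(1)/Γ(1) + Γ'(1)/Γ(1) − (Γ'(1)/Γ(1))² = (n+1)·2^(n−4). -/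
open Polynomial Finset

/-- Weighted generating function of `a`-labeled edges in closed polygons of the
`n`-th Schreier graph of the Basilica group, for `n` even. -/
noncomputable def basilicaGammaEven (n : ℕ) : ℝ → ℝ := fun a =>
  (∏ k ∈ Finset.Icc 1 (n / 2 - 1), (1 + a ^ (2 ^ k)) ^ (2 ^ (n - 2 * k - 1))) *
    (1 + a ^ (2 ^ (n / 2)))

/-- Weighted generating function of `a`-labeled edges in closed polygons of the
`n`-th Schreier graph of the Basilica group, for `n` odd. -/
noncomputable def basilicaGammaOdd (n : ℕ) : ℝ → ℝ := fun a =>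
  (∏ k ∈ Finset.Icc 1 ((n - 1) / 2 - 1), (1 + a ^ (2 ^ k)) ^ (2 ^ (n - 2 * k - 1))) *
    (1 + a ^ (2 ^ ((n - 1) / 2))) ^ 2

noncomputable def pmu (p : ℝ[X]) : ℝ := (derivative p).eval 1 / p.eval 1
noncomputable def pnu (p : ℝ[X]) : ℝ :=
  (derivative (derivative p)).eval 1 / p.eval 1 + pmu p - (pmu p) ^ 2

lemma pmu_mul {p q : ℝ[X]} (hp : p.eval 1 ≠ 0) (hq : q.eval 1 ≠ 0) :
    pmu (p * q) = pmu p + pmu q := by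
  unfold pmu
  simp only [derivative_mul, eval_add, eval_mul]
  field_simp

lemma pnu_mul {p q : ℝ[X]} (hp : p.eval 1 ≠ 0) (hq : q.eval 1 ≠ 0) :
    pnu (p * q) = pnu p + pnu q := by
  unfold pnu pmu
  simp only [derivative_mul, derivative_add, eval_add, eval_mul]
  field_simp
  ring

lemma pmu_one : pmu (1 : ℝ[X]) = 0 := by simp [pmu]

lemma pnu_one : pnu (1 : ℝ[X]) = 0 := by simp [pnu, pmu]

lemma pmu_pow {p : ℝ[X]} (hp : p.eval 1 ≠ 0) (e : ℕ) : pmu (p ^ e) = e * pmu p := by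
  induction e with
  | zero => simp [pmu_one]
  | succ m ih =>
      rw [pow_succ, pmu_mul (by simp [pow_ne_zero, hp]) hp, ih]
      push_cast; ring

lemma pnu_pow {p : ℝ[X]} (hp : p.eval 1 ≠ 0) (e : ℕ) : pnu (p ^ e) = e * pnu p := by
  induction e with
  | zero => simp [pnu_one]
  | succ m ih =>
      rw [pow_succ, pnu_mul (by simp [pow_ne_zero, hp]) hp, ih]
      push_cast; ring

lemma pmu_prod {ι : Type*} (s : Finset ι) (f : ι → ℝ[X])
    (h : ∀ i ∈ s, (f i).eval 1 ≠ 0) :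
    pmu (∏ i ∈ s, f i) = ∑ i ∈ s, pmu (f i) := by
  induction s using Finset.cons_induction with
  | empty => simp [pmu_one]
  | cons i s his ih =>
      rw [Finset.prod_cons, Finset.sum_cons,
        pmu_mul (h i (Finset.mem_cons_self i s)) ?_,
        ih (fun j hj => h j (Finset.mem_cons_of_mem hj))]
      rw [eval_prod]
      exact Finset.prod_ne_zero_iff.2 fun j hj => h j (Finset.mem_cons_of_mem hj)

lemma pnu_prod {ι : Type*} (s : Finset ι) (f : ι → ℝ[X])
    (h : ∀ i ∈ s, (f i).eval 1 ≠ 0) :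
    pnu (∏ i ∈ s, f i) = ∑ i ∈ s, pnu (f i) := by
  induction s using Finset.cons_induction with
  | empty => simp [pnu_one]
  | cons i s his ih =>
      rw [Finset.prod_cons, Finset.sum_cons,
        pnu_mul (h i (Finset.mem_cons_self i s)) ?_,
        ih (fun j hj => h j (Finset.mem_cons_of_mem hj))]
      rw [eval_prod]
      exact Finset.prod_ne_zero_iff.2 fun j hj => h j (Finset.mem_cons_of_mem hj)

lemma base_eval (m : ℕ) : (1 + X ^ m : ℝ[X]).eval 1 = 2 := by simp; norm_num

lemma base_eval_ne (m : ℕ) : (1 + X ^ m : ℝ[X]).eval 1 ≠ 0 := by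
  rw [base_eval]; norm_num

lemma factor_eval_ne (m e : ℕ) : (((1 + X ^ m) ^ e : ℝ[X])).eval 1 ≠ 0 := by
  rw [eval_pow]
  exact pow_ne_zero _ (base_eval_ne m)

lemma pmu_base (m : ℕ) : pmu (1 + X ^ m : ℝ[X]) = m / 2 := by
  unfold pmu
  rw [base_eval]
  simp [derivative_X_pow]

lemma pnu_base {m : ℕ} (hm : 1 ≤ m) : pnu (1 + X ^ m : ℝ[X]) = (m : ℝ) ^ 2 / 4 := by
  unfold pnu
  rw [pmu_base, base_eval]
  simp only [derivative_add, derivative_one, derivative_X_pow, zero_add, derivative_mul,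
    derivative_C, zero_mul, eval_add, eval_mul, eval_C, eval_pow, eval_X, one_pow, mul_one]
  have : ((m - 1 : ℕ) : ℝ) = (m : ℝ) - 1 := by
    push_cast [hm]; ring
  rw [this]
  ring

lemma pmu_factor {n k : ℕ} (h : 2 * k + 2 ≤ n) :
    pmu (((1 + X ^ (2 ^ k)) ^ (2 ^ (n - 2 * k - 1)) : ℝ[X])) = 2 ^ (n - k - 2) := by
  rw [pmu_pow (base_eval_ne _), pmu_base]
  push_cast
  rw [← mul_div_assoc, ← pow_add]
  have : n - 2 * k - 1 + k = (n - k - 2) + 1 := by omega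
  rw [this, pow_succ]
  ring

lemma pnu_factor {n k : ℕ} (hk : 1 ≤ k) (h : 2 * k + 2 ≤ n) :
    pnu (((1 + X ^ (2 ^ k)) ^ (2 ^ (n - 2 * k - 1)) : ℝ[X])) = 2 ^ (n - 3) := by
  rw [pnu_pow (base_eval_ne _), pnu_base Nat.one_le_two_pow]
  push_cast
  rw [← mul_div_assoc, ← pow_mul, ← pow_add]
  have : n - 2 * k - 1 + k * 2 = (n - 3) + 2 := by omega
  rw [this, pow_add]
  ring

lemma geom_sum (n : ℕ) : ∀ M : ℕ, 2 * M + 2 ≤ n →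
    ∑ k ∈ Icc 1 M, (2 : ℝ) ^ (n - k - 2) = 2 ^ (n - 2) - 2 ^ (n - M - 2) := by
  intro M
  induction M with
  | zero => intro h; simp
  | succ m ih =>
      intro h
      rw [Finset.sum_Icc_succ_top (by omega), ih (by omega)]
      have h1 : n - m - 2 = (n - (m + 1) - 2) + 1 := by omega
      rw [h1, pow_succ]
      ring

lemma deriv_eval (p : ℝ[X]) :
    deriv (fun a => p.eval a) = fun a => (derivative p).eval a := by
  funext a; exact Polynomial.deriv (p := p)

noncomputable def pEven (n : ℕ) : ℝ[X] :=
  (∏ k ∈ Finset.Icc 1 (n / 2 - 1), (1 + X ^ (2 ^ k)) ^ (2 ^ (n - 2 * k - 1))) *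
    (1 + X ^ (2 ^ (n / 2)))

noncomputable def pOdd (n : ℕ) : ℝ[X] :=
  (∏ k ∈ Finset.Icc 1 ((n - 1) / 2 - 1), (1 + X ^ (2 ^ k)) ^ (2 ^ (n - 2 * k - 1))) *
    (1 + X ^ (2 ^ ((n - 1) / 2))) ^ 2

lemma gammaEven_eq (n : ℕ) : basilicaGammaEven n = fun a => (pEven n).eval a := by
  funext a
  simp [basilicaGammaEven, pEven, eval_prod]

lemma gammaOdd_eq (n : ℕ) : basilicaGammaOdd n = fun a => (pOdd n).eval a := by
  funext a
  simp [basilicaGammaOdd, pOdd, eval_prod]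

theorem basilica_a_edges_mean_variance :
    (∀ n : ℕ, 4 ≤ n → Even n →
      deriv (basilicaGammaEven n) 1 / basilicaGammaEven n 1 = 2 ^ (n - 2) ∧
      deriv (deriv (basilicaGammaEven n)) 1 / basilicaGammaEven n 1 +
          deriv (basilicaGammaEven n) 1 / basilicaGammaEven n 1 -
          (deriv (basilicaGammaEven n) 1 / basilicaGammaEven n 1) ^ 2 =
        (n + 2) * 2 ^ (n - 4)) ∧
    (∀ n : ℕ, 5 ≤ n → Odd n →
      deriv (basilicaGammaOdd n) 1 / basilicaGammaOdd n 1 = 2 ^ (n - 2) ∧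
      deriv (deriv (basilicaGammaOdd n)) 1 / basilicaGammaOdd n 1 +
          deriv (basilicaGammaOdd n) 1 / basilicaGammaOdd n 1 -
          (deriv (basilicaGammaOdd n) 1 / basilicaGammaOdd n 1) ^ 2 =
        (n + 1) * 2 ^ (n - 4)) := by
  constructor
  · -- even case
    intro n hn he
    rw [Nat.even_iff] at he
    obtain ⟨m, rfl⟩ : ∃ m, n = 2 * m + 2 := ⟨n / 2 - 1, by omega⟩
    have hm : 1 ≤ m := by omega
    have hd1 : (2 * m + 2) / 2 - 1 = m := by omega
    have hd2 : (2 * m + 2) / 2 = m + 1 := by omega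
    have hfac : ∀ k ∈ Icc 1 m,
        (((1 + X ^ (2 ^ k)) ^ (2 ^ (2 * m + 2 - 2 * k - 1)) : ℝ[X])).eval 1 ≠ 0 :=
      fun k _ => factor_eval_ne _ _
    have hprod_ne :
        ((∏ k ∈ Icc 1 m, ((1 + X ^ (2 ^ k)) ^ (2 ^ (2 * m + 2 - 2 * k - 1)) : ℝ[X]))).eval 1 ≠ 0 := by
      rw [eval_prod]
      exact Finset.prod_ne_zero_iff.2 hfac
    have hmu : pmu (pEven (2 * m + 2)) = 2 ^ (2 * m) := by
      unfold pEven
      rw [hd1, hd2, pmu_mul hprod_ne (base_eval_ne _), pmu_prod _ _ hfac,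
        Finset.sum_congr rfl (fun k hk => pmu_factor (by
          have := Finset.mem_Icc.mp hk; omega)),
        geom_sum _ m (by omega), pmu_base]
      push_cast
      rw [show (2:ℝ) ^ (m+1) = 2 ^ m * 2 from pow_succ 2 m]
      ring_nf
      rw [show 2 + m * 2 - m - 2 = m from by omega]
      ring
    have hnu : pnu (pEven (2 * m + 2)) = (2 * (m : ℝ) + 4) * 2 ^ (2 * m - 2) := by
      unfold pEven
      rw [hd1, hd2, pnu_mul hprod_ne (base_eval_ne _), pnu_prod _ _ hfac,
        Finset.sum_congr rfl (fun k hk => pnu_factor (by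
          have := Finset.mem_Icc.mp hk; omega) (by
          have := Finset.mem_Icc.mp hk; omega)),
        Finset.sum_const, Nat.card_Icc, pnu_base Nat.one_le_two_pow]
      push_cast
      have h1 : (2 : ℝ) ^ (2 * m + 2 - 3) = 2 * 2 ^ (2 * m - 2) := by
        rw [show 2 * m + 2 - 3 = (2 * m - 2) + 1 from by omega, pow_succ]; ring
      have h2 : ((2 : ℝ) ^ (m + 1)) ^ 2 = 16 * 2 ^ (2 * m - 2) := by
        rw [← pow_mul, show (m + 1) * 2 = (2 * m - 2) + 4 from by omega, pow_add]; ring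
      have h1' : (2 : ℝ) ^ (2 * m - 1) = 2 * 2 ^ (2 * m - 2) := by
        rw [show 2 * m - 1 = (2 * m - 2) + 1 from by omega, pow_succ]; ring
      rw [h1', h2]
      ring
    have e0 : basilicaGammaEven (2 * m + 2) 1 = (pEven (2 * m + 2)).eval 1 := by
      rw [gammaEven_eq]
    have e1 : deriv (basilicaGammaEven (2 * m + 2)) 1 =
        (derivative (pEven (2 * m + 2))).eval 1 := by
      rw [gammaEven_eq, deriv_eval]
    have e2 : deriv (deriv (basilicaGammaEven (2 * m + 2))) 1 =
        (derivative (derivative (pEven (2 * m + 2)))).eval 1 := by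
      rw [gammaEven_eq, deriv_eval, deriv_eval]
    have hmean : deriv (basilicaGammaEven (2 * m + 2)) 1 /
        basilicaGammaEven (2 * m + 2) 1 = 2 ^ (2 * m + 2 - 2) := by
      rw [e0, e1, show 2 * m + 2 - 2 = 2 * m from by omega]
      exact hmu
    refine ⟨hmean, ?_⟩
    have hnu' := hnu
    unfold pnu pmu at hnu'
    rw [e0, e1, e2, hnu']
    rw [show 2 * m + 2 - 4 = 2 * m - 2 from by omega]
    push_cast
    ring
  · -- odd case
    intro n hn ho
    rw [Nat.odd_iff] at ho
    obtain ⟨m, rfl⟩ : ∃ m, n = 2 * m + 3 := ⟨(n - 3) / 2, by omega⟩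
    have hm : 1 ≤ m := by omega
    have hd1 : (2 * m + 3 - 1) / 2 - 1 = m := by omega
    have hd2 : (2 * m + 3 - 1) / 2 = m + 1 := by omega
    have hfac : ∀ k ∈ Icc 1 m,
        (((1 + X ^ (2 ^ k)) ^ (2 ^ (2 * m + 3 - 2 * k - 1)) : ℝ[X])).eval 1 ≠ 0 :=
      fun k _ => factor_eval_ne _ _
    have hprod_ne :
        ((∏ k ∈ Icc 1 m, ((1 + X ^ (2 ^ k)) ^ (2 ^ (2 * m + 3 - 2 * k - 1)) : ℝ[X]))).eval 1 ≠ 0 := by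
      rw [eval_prod]
      exact Finset.prod_ne_zero_iff.2 hfac
    have hmu : pmu (pOdd (2 * m + 3)) = 2 ^ (2 * m + 1) := by
      unfold pOdd
      rw [hd1, hd2, pmu_mul hprod_ne (factor_eval_ne _ _), pmu_prod _ _ hfac,
        Finset.sum_congr rfl (fun k hk => pmu_factor (by
          have := Finset.mem_Icc.mp hk; omega)),
        geom_sum _ m (by omega), pmu_pow (base_eval_ne _), pmu_base]
      push_cast
      ring_nf
      rw [show 3 + m * 2 - m - 2 = m + 1 from by omega, pow_succ]
      ring
    have hnu : pnu (pOdd (2 * m + 3)) = (2 * (m : ℝ) + 4) * 2 ^ (2 * m - 1) := by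
      unfold pOdd
      rw [hd1, hd2, pnu_mul hprod_ne (factor_eval_ne _ _), pnu_prod _ _ hfac,
        Finset.sum_congr rfl (fun k hk => pnu_factor (by
          have := Finset.mem_Icc.mp hk; omega) (by
          have := Finset.mem_Icc.mp hk; omega)),
        Finset.sum_const, Nat.card_Icc, pnu_pow (base_eval_ne _),
        pnu_base Nat.one_le_two_pow]
      push_cast
      have h1 : (2 : ℝ) ^ (2 * m + 3 - 3) = 2 * 2 ^ (2 * m - 1) := by
        rw [show 2 * m + 3 - 3 = (2 * m - 1) + 1 from by omega, pow_succ]; ring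
      have h2 : ((2 : ℝ) ^ (m + 1)) ^ 2 = 8 * 2 ^ (2 * m - 1) := by
        rw [← pow_mul, show (m + 1) * 2 = (2 * m - 1) + 3 from by omega, pow_add]; ring
      have h1' : (2 : ℝ) ^ (2 * m) = 2 * 2 ^ (2 * m - 1) := by
        nth_rewrite 1 [show 2 * m = (2 * m - 1) + 1 from by omega]
        rw [pow_succ]; ring
      rw [h1', h2]
      ring
    have e0 : basilicaGammaOdd (2 * m + 3) 1 = (pOdd (2 * m + 3)).eval 1 := by
      rw [gammaOdd_eq]
    have e1 : deriv (basilicaGammaOdd (2 * m + 3)) 1 =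
        (derivative (pOdd (2 * m + 3))).eval 1 := by
      rw [gammaOdd_eq, deriv_eval]
    have e2 : deriv (deriv (basilicaGammaOdd (2 * m + 3))) 1 =
        (derivative (derivative (pOdd (2 * m + 3)))).eval 1 := by
      rw [gammaOdd_eq, deriv_eval, deriv_eval]
    have hmean : deriv (basilicaGammaOdd (2 * m + 3)) 1 /
        basilicaGammaOdd (2 * m + 3) 1 = 2 ^ (2 * m + 3 - 2) := by
      rw [e0, e1, show 2 * m + 3 - 2 = 2 * m + 1 from by omega]
      exact hmu
    refine ⟨hmean, ?_⟩
    have hnu' := hnu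
    unfold pnu pmu at hnu'
    rw [e0, e1, e2, hnu']
    rw [show 2 * m + 3 - 4 = 2 * m - 1 from by omega]
    push_cast
    ring
end

section
/- Fix z ∈ [0,1]. For even n ≥ 4 set Γ_n(z) = ∏_{k=1}^{n/2−1} (1 + z^(2^k))^(3·2^(n−2k−1)) · (1 + z^(2^(n/2)))³, and for odd n ≥ 5 set Γ_n(z) = ∏_{k=1}^{(n−1)/2−1} (1 + z^(2^k))^(3·2^(n−2k−1)) · (1 + z^(2^((n−1)/2)))⁴ · (1 + z^(2^((n+1)/2))). Then the series ∑_{k=1}^∞ 4^(−k)·log(1 + z^(2^k)) converges, and (log Γ_n(z))/2^n converges as n → ∞ to (3/2)·∑_{k=1}^∞ 4^(−k)·log(1 + z^(2^k)). -/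
/-!
Taking logarithms, level `k` of the product contributes
`3 * 2 ^ (n - 2k - 1) * log (1 + z ^ 2 ^ k) / 2 ^ n = (3 / 2) * log (1 + z ^ 2 ^ k) / 4 ^ k`,
so the levels `1, …, n / 2 - 1` give a partial sum of the limiting series. For `z ∈ [0, 1]`
the remaining factors lie in `[1, 2 ^ 5]`, so their contribution is `O(2 ^ (-n))`.
-/

open Filter

/-- Generating function of closed polygons of the `n`-th Schreier graph of the
Basilica group, evaluated at `z`. -/
noncomputable def basilicaGamma (n : ℕ) (z : ℝ) : ℝ :=
  if Even n then
    (∏ k ∈ Finset.Icc 1 (n / 2 - 1), (1 + z ^ (2 ^ k)) ^ (3 * 2 ^ (n - 2 * k - 1))) *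
      (1 + z ^ (2 ^ (n / 2))) ^ 3
  else
    (∏ k ∈ Finset.Icc 1 ((n - 1) / 2 - 1), (1 + z ^ (2 ^ k)) ^ (3 * 2 ^ (n - 2 * k - 1))) *
      (1 + z ^ (2 ^ ((n - 1) / 2))) ^ 4 * (1 + z ^ (2 ^ ((n + 1) / 2)))

open Real

lemma summable_div_four_pow_of_abs_le {f : ℕ → ℝ} {C : ℝ} (hf : ∀ k, |f k| ≤ C) :
    Summable fun k => f k / 4 ^ k := by
  refine .of_norm_bounded ((summable_geometric_of_lt_one (by norm_num) (by norm_num :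
    (1 / 4 : ℝ) < 1)).mul_left C) fun k => ?_
  rw [norm_div, Real.norm_eq_abs, norm_pow, Real.norm_ofNat, one_div, inv_pow, ← div_eq_mul_inv]
  gcongr
  exact hf k

lemma tendsto_div_two_pow_of_abs_le {f : ℕ → ℝ} {C : ℝ} (hf : ∀ n, |f n| ≤ C) :
    Tendsto (fun n => f n / 2 ^ n) atTop (nhds 0) := by
  have hgeom : Tendsto (fun n : ℕ => C * (1 / 2 : ℝ) ^ n) atTop (nhds 0) := by
    simpa using (tendsto_pow_atTop_nhds_zero_of_lt_one (by norm_num)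
      (by norm_num : (1 / 2 : ℝ) < 1)).const_mul C
  refine squeeze_zero_norm (fun n => ?_) hgeom
  rw [norm_div, Real.norm_eq_abs, norm_pow, Real.norm_ofNat, one_div, inv_pow, ← div_eq_mul_inv]
  gcongr
  exact hf n

lemma one_le_one_add_pow {z : ℝ} (hz : 0 ≤ z) (p : ℕ) : 1 ≤ 1 + z ^ p := by
  linarith [pow_nonneg hz p]

lemma one_add_pow_le_two {z : ℝ} (hz0 : 0 ≤ z) (hz1 : z ≤ 1) (p : ℕ) : 1 + z ^ p ≤ 2 := by
  linarith [pow_le_one₀ hz0 hz1 (n := p)]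

lemma abs_log_le_log_of_one_le {x y : ℝ} (h1 : 1 ≤ x) (h2 : x ≤ y) : |log x| ≤ log y := by
  rw [abs_of_nonneg (log_nonneg h1)]
  exact log_le_log (by linarith) h2

lemma summable_log_one_add_pow_two_pow_div_four_pow {z : ℝ} (hz0 : 0 ≤ z) (hz1 : z ≤ 1) :
    Summable fun k : ℕ => log (1 + z ^ 2 ^ (k + 1)) / 4 ^ (k + 1) :=
  (summable_nat_add_iff 1).mpr <| summable_div_four_pow_of_abs_le fun _ =>
    abs_log_le_log_of_one_le (one_le_one_add_pow hz0 _) (one_add_pow_le_two hz0 hz1 _)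

/-- The levels `1, …, n / 2 - 1` of `basilicaGamma n z`, common to both parities of `n`. -/
noncomputable def basilicaGammaBulk (n : ℕ) (z : ℝ) : ℝ :=
  ∏ k ∈ Finset.Icc 1 (n / 2 - 1), (1 + z ^ 2 ^ k) ^ (3 * 2 ^ (n - 2 * k - 1))

noncomputable def basilicaGammaBoundary (n : ℕ) (z : ℝ) : ℝ :=
  if Even n then (1 + z ^ 2 ^ (n / 2)) ^ 3
  else (1 + z ^ 2 ^ (n / 2)) ^ 4 * (1 + z ^ 2 ^ (n / 2 + 1))

lemma basilicaGamma_eq_bulk_mul_boundary (n : ℕ) (z : ℝ) :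
    basilicaGamma n z = basilicaGammaBulk n z * basilicaGammaBoundary n z := by
  rw [basilicaGamma, basilicaGammaBulk, basilicaGammaBoundary]
  split_ifs with hn
  · rfl
  · have hodd : (n - 1) / 2 = n / 2 ∧ (n + 1) / 2 = n / 2 + 1 := by
      obtain ⟨t, rfl⟩ := Nat.not_even_iff_odd.mp hn
      omega
    rw [hodd.1, hodd.2, mul_assoc]

lemma log_basilicaGammaBulk_div_two_pow (n : ℕ) {z : ℝ} (hz : 0 ≤ z) :
    log (basilicaGammaBulk n z) / 2 ^ n =
      3 / 2 * ∑ k ∈ Finset.range (n / 2 - 1), log (1 + z ^ 2 ^ (k + 1)) / 4 ^ (k + 1) := by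
  have hpos (p : ℕ) : 0 < 1 + z ^ p := by linarith [one_le_one_add_pow hz p]
  rw [basilicaGammaBulk, log_prod fun k _ => (pow_pos (hpos _) _).ne', Finset.sum_div,
    Finset.mul_sum, ← Finset.Ico_add_one_right_eq_Icc, Finset.sum_Ico_eq_sum_range]
  refine Finset.sum_congr rfl fun k hk => ?_
  have hk : 2 * (1 + k) + 1 ≤ n := by
    have := Finset.mem_range.mp hk
    omega
  have h2n : (2 : ℝ) ^ n = 2 * 2 ^ (n - 2 * (1 + k) - 1) * 4 ^ (1 + k) := by
    rw [show (4 : ℝ) = 2 ^ 2 by norm_num, ← pow_mul, ← pow_succ', ← pow_add]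
    congr 1
    omega
  rw [log_pow, h2n, add_comm 1 k]
  push_cast
  field_simp

lemma one_le_basilicaGammaBoundary (n : ℕ) {z : ℝ} (hz : 0 ≤ z) :
    1 ≤ basilicaGammaBoundary n z := by
  rw [basilicaGammaBoundary]
  split_ifs
  · exact one_le_pow₀ (one_le_one_add_pow hz _)
  · exact one_le_mul_of_one_le_of_one_le (one_le_pow₀ (one_le_one_add_pow hz _))
      (one_le_one_add_pow hz _)

lemma basilicaGammaBoundary_le (n : ℕ) {z : ℝ} (hz0 : 0 ≤ z) (hz1 : z ≤ 1) :
    basilicaGammaBoundary n z ≤ 2 ^ 5 := by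
  have h2 := one_add_pow_le_two hz0 hz1
  rw [basilicaGammaBoundary]
  split_ifs
  · calc (1 + z ^ 2 ^ (n / 2)) ^ 3 ≤ 2 ^ 3 := by gcongr; exact h2 _
      _ ≤ 2 ^ 5 := by norm_num
  · calc (1 + z ^ 2 ^ (n / 2)) ^ 4 * (1 + z ^ 2 ^ (n / 2 + 1)) ≤ 2 ^ 4 * 2 := by
          gcongr <;> exact h2 _
      _ = 2 ^ 5 := by norm_num

lemma log_basilicaGamma (n : ℕ) {z : ℝ} (hz : 0 ≤ z) :
    log (basilicaGamma n z) = log (basilicaGammaBulk n z) + log (basilicaGammaBoundary n z) := by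
  have hbulk_pos : 0 < basilicaGammaBulk n z :=
    Finset.prod_pos fun k _ => pow_pos (by linarith [one_le_one_add_pow hz (2 ^ k)]) _
  rw [basilicaGamma_eq_bulk_mul_boundary, log_mul hbulk_pos.ne'
    (by linarith [one_le_basilicaGammaBoundary n hz])]

theorem basilica_thermodynamic_limit (z : ℝ) (hz : z ∈ Set.Icc (0 : ℝ) 1) :
    Summable (fun k : ℕ => Real.log (1 + z ^ (2 ^ (k + 1))) / 4 ^ (k + 1)) ∧
    Tendsto (fun n : ℕ => Real.log (basilicaGamma n z) / 2 ^ n) atTop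
      (nhds ((3 / 2) * ∑' k : ℕ, Real.log (1 + z ^ (2 ^ (k + 1))) / 4 ^ (k + 1))) := by
  obtain ⟨hz0, hz1⟩ := hz
  have hsum := summable_log_one_add_pow_two_pow_div_four_pow hz0 hz1
  refine ⟨hsum, ?_⟩
  have hbulk : Tendsto (fun n => log (basilicaGammaBulk n z) / 2 ^ n) atTop
      (nhds (3 / 2 * ∑' k : ℕ, log (1 + z ^ 2 ^ (k + 1)) / 4 ^ (k + 1))) := by
    simp only [log_basilicaGammaBulk_div_two_pow _ hz0]
    exact (hsum.hasSum.tendsto_sum_nat.comp <| (tendsto_sub_atTop_nat 1).comp <|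
      Nat.tendsto_div_const_atTop two_ne_zero).const_mul _
  have hboundary : Tendsto (fun n => log (basilicaGammaBoundary n z) / 2 ^ n) atTop (nhds 0) :=
    tendsto_div_two_pow_of_abs_le fun n => abs_log_le_log_of_one_le
      (one_le_basilicaGammaBoundary n hz0) (basilicaGammaBoundary_le n hz0 hz1)
  simp only [log_basilicaGamma _ hz0, add_div]
  simpa using hbulk.add hboundary
end

section
/- Fix a real z > 0. Define sequences Γ, Υ : ℕ → ℝ (indexed by n ≥ 1) by Γ₁ = 1 + z³, Υ₁ = z² + z, and for n ≥ 1: Γ_{n+1} = Γ_n³ + z³·Υ_n³ and Υ_{n+1} = z·Υ_n²·Γ_n + z²·Υ_n³. Define ψ : ℕ → ℝ (indexed by k ≥ 1) by ψ₁ = (z+1)/z and ψ_{k+1} = ψ_k² − 3ψ_k + 4. Then for all n ≥ 1: Γ_n = z^(3^n) · ∏_{k=1}^n ψ_k^(3^(n−k)) · (ψ_{n+1} − 1) and Υ_n = z^(3^n − 1) · ∏_{k=1}^n ψ_k^(3^(n−k)). -/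
theorem hanoi_generating_function_closed_form (z : ℝ) (hz : 0 < z)
    (Γ Υ ψ : ℕ → ℝ)
    (hΓ1 : Γ 1 = 1 + z ^ 3) (hΥ1 : Υ 1 = z ^ 2 + z)
    (hΓ : ∀ n : ℕ, 1 ≤ n → Γ (n + 1) = Γ n ^ 3 + z ^ 3 * Υ n ^ 3)
    (hΥ : ∀ n : ℕ, 1 ≤ n → Υ (n + 1) = z * Υ n ^ 2 * Γ n + z ^ 2 * Υ n ^ 3)
    (hψ1 : ψ 1 = (z + 1) / z)
    (hψ : ∀ k : ℕ, 1 ≤ k → ψ (k + 1) = ψ k ^ 2 - 3 * ψ k + 4) :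
    ∀ n : ℕ, 1 ≤ n →
      Γ n = z ^ (3 ^ n) * (∏ k ∈ Finset.Icc 1 n, ψ k ^ (3 ^ (n - k))) * (ψ (n + 1) - 1) ∧
      Υ n = z ^ (3 ^ n - 1) * ∏ k ∈ Finset.Icc 1 n, ψ k ^ (3 ^ (n - k)) := by
  have hz0 : z ≠ 0 := ne_of_gt hz
  intro n hn
  induction n, hn using Nat.le_induction with
  | base =>
    have h2 : ψ 2 = ψ 1 ^ 2 - 3 * ψ 1 + 4 := hψ 1 le_rfl
    simp only [Finset.Icc_self, Finset.prod_singleton, Nat.sub_self, pow_zero, pow_one]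
    constructor
    · rw [hΓ1, h2, hψ1]; field_simp; ring
    · rw [hΥ1, hψ1]; field_simp
  | succ n hn ih =>
    obtain ⟨ihΓ, ihΥ⟩ := ih
    set P := ∏ k ∈ Finset.Icc 1 n, ψ k ^ (3 ^ (n - k)) with hP
    have hm : 1 ≤ 3 ^ n := Nat.one_le_pow _ _ (by norm_num)
    have h3 : 3 ^ (n + 1) = 3 ^ n * 3 := pow_succ 3 n
    set B := z ^ (3 ^ n - 1) with hB
    have hAB : z ^ (3 ^ n) = z * B := by
      rw [hB, ← pow_succ']; congr 1; omega
    have hprod : ∏ k ∈ Finset.Icc 1 (n + 1), ψ k ^ (3 ^ (n + 1 - k))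
        = P ^ 3 * ψ (n + 1) := by
      rw [Finset.prod_Icc_succ_top (by omega : 1 ≤ n + 1), Nat.sub_self, pow_zero, pow_one]
      congr 1
      rw [hP, ← Finset.prod_pow]
      refine Finset.prod_congr rfl fun k hk => ?_
      rw [Finset.mem_Icc] at hk
      rw [← pow_mul]
      congr 1
      have : n + 1 - k = (n - k) + 1 := by omega
      rw [this, pow_succ]
    have hz1 : z ^ (3 ^ (n + 1)) = (z * B) ^ 3 := by
      rw [← hAB, ← pow_mul, h3]
    have hz2 : z ^ (3 ^ (n + 1) - 1) = z * B ^ 2 * (z * B) := by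
      rw [← hAB, hB, ← pow_mul, ← pow_succ', ← pow_add]
      congr 1
      omega
    have hψ2 : ψ (n + 1 + 1) = ψ (n + 1) ^ 2 - 3 * ψ (n + 1) + 4 := hψ (n + 1) (by omega)
    rw [hΓ (n) hn, hΥ (n) hn, ihΓ, ihΥ, hprod, hz1, hz2, hψ2, hAB]
    constructor <;> ring
end

section
/- Define φ : ℕ → (ℝ → ℝ) (indexed by k ≥ 1) by φ₁(z) = z + 1 and φ_{k+1}(z) = φ_k(z)² − 3·z^(2^(k−1))·φ_k(z) + 4·z^(2^k). Then for every k ≥ 2 and every z ∈ [0,1]: 2·z^(2^(k−1)) ≤ φ_k(z) ≤ 2^(2^k − 1). -/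
theorem hanoi_phi_bounds (φ : ℕ → ℝ → ℝ)
    (hφ1 : ∀ z : ℝ, φ 1 z = z + 1)
    (hφ : ∀ k : ℕ, 1 ≤ k → ∀ z : ℝ,
      φ (k + 1) z = φ k z ^ 2 - 3 * z ^ (2 ^ (k - 1)) * φ k z + 4 * z ^ (2 ^ k)) :
    ∀ k : ℕ, 2 ≤ k → ∀ z ∈ Set.Icc (0 : ℝ) 1,
      2 * z ^ (2 ^ (k - 1)) ≤ φ k z ∧ φ k z ≤ 2 ^ (2 ^ k - 1) := by
  intro k hk z hz
  obtain ⟨hz0, hz1⟩ := hz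
  induction k, hk using Nat.le_induction with
  | base =>
    have h2 : φ 2 z = 2 * z ^ 2 - z + 1 := by
      have h := hφ 1 le_rfl z
      rw [hφ1] at h
      norm_num at h
      rw [h]; ring
    refine ⟨?_, ?_⟩
    · rw [h2]; norm_num; nlinarith
    · rw [h2]; norm_num; nlinarith
  | succ k hk ih =>
    obtain ⟨hl, hu⟩ := ih
    have hk1 : 1 ≤ k := le_trans one_le_two hk
    have heq := hφ k hk1 z
    set t := z ^ (2 ^ (k - 1)) with ht
    have ht0 : 0 ≤ t := pow_nonneg hz0 _
    have ht1 : t ≤ 1 := pow_le_one₀ hz0 hz1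
    have hz2k : z ^ (2 ^ k) = t ^ 2 := by
      rw [ht, ← pow_mul]
      congr 1
      have : k - 1 + 1 = k := Nat.sub_add_cancel hk1
      rw [← pow_succ, this]
    have hkk : (k + 1) - 1 = k := by omega
    have h2k1 : 1 ≤ 2 ^ k := Nat.one_le_two_pow
    have hMexp : 2 ^ (k + 1) - 1 = (2 ^ k - 1) + (2 ^ k - 1) + 1 := by
      have : 2 ^ (k + 1) = 2 ^ k + 2 ^ k := by rw [pow_succ]; omega
      omega
    have hM2 : (2 : ℝ) ^ (2 ^ (k + 1) - 1)
        = 2 * ((2 : ℝ) ^ (2 ^ k - 1)) ^ 2 := by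
      rw [hMexp, pow_add, pow_add]; ring
    have hMge : (2 : ℝ) ≤ (2 : ℝ) ^ (2 ^ k - 1) := by
      calc (2 : ℝ) = 2 ^ 1 := (pow_one 2).symm
        _ ≤ 2 ^ (2 ^ k - 1) := by
            apply pow_le_pow_right₀ one_le_two
            have : 2 ≤ 2 ^ k := by
              calc 2 = 2 ^ 1 := (pow_one 2).symm
                _ ≤ 2 ^ k := Nat.pow_le_pow_right (by norm_num) hk1
            omega
    constructor
    · rw [hkk, heq, hz2k]
      nlinarith [mul_nonneg (sub_nonneg.2 hl) (by nlinarith : (0:ℝ) ≤ φ k z - t)]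
    · rw [heq, hz2k, hM2]
      have hφ0 : 0 ≤ φ k z := le_trans (by positivity) hl
      nlinarith [mul_nonneg ht0 hφ0, sq_nonneg (φ k z)]
end

section
/- Define φ : ℕ → (ℝ → ℝ) (indexed by k ≥ 1) by φ₁(z) = z + 1 and φ_{k+1}(z) = φ_k(z)² − 3·z^(2^(k−1))·φ_k(z) + 4·z^(2^k). Then for every z ∈ (0,1], the series ∑_{k=1}^∞ log(φ_k(z))/3^k converges absolutely. -/
theorem hanoi_phi_log_summable (φ : ℕ → ℝ → ℝ)
    (hφ1 : ∀ z : ℝ, φ 1 z = z + 1)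
    (hφ : ∀ k : ℕ, 1 ≤ k → ∀ z : ℝ,
      φ (k + 1) z = φ k z ^ 2 - 3 * z ^ (2 ^ (k - 1)) * φ k z + 4 * z ^ (2 ^ k)) :
    ∀ z ∈ Set.Ioc (0 : ℝ) 1,
      Summable (fun k : ℕ => |Real.log (φ (k + 1) z) / 3 ^ (k + 1)|) := by
  intro z hz
  obtain ⟨hz0, hz1⟩ := hz
  -- Key bounds by induction
  have key : ∀ k : ℕ, 1 ≤ k →
      2 * z ^ (2 ^ (k - 1)) ≤ φ k z ∧ φ k z ≤ 2 ^ (2 ^ k - 1) := by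
    intro k hk
    induction k, hk using Nat.le_induction with
    | base =>
      rw [hφ1]
      constructor
      · simp only [Nat.sub_self, pow_zero, pow_one]
        linarith
      · norm_num
        linarith
    | succ k hk ih =>
      obtain ⟨ih1, ih2⟩ := ih
      have hrec := hφ k hk z
      have hu : (0 : ℝ) < z ^ (2 ^ (k - 1)) := pow_pos hz0 _
      set u := z ^ (2 ^ (k - 1)) with hu_def
      have hexp : 2 ^ k = 2 ^ (k - 1) * 2 := by
        rw [← pow_succ]
        congr 1
        omega
      have hz2 : z ^ (2 ^ k) = u ^ 2 := by
        rw [hexp, pow_mul]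
      have hexp' : 2 ^ (k + 1 - 1) = 2 ^ k := by norm_num
      have hφpos : 0 < φ k z := lt_of_lt_of_le (by linarith) ih1
      constructor
      · -- lower bound: 2 * z^(2^k) ≤ φ (k+1) z
        rw [hexp', hz2, hrec, hz2]
        have huφ : u ≤ φ k z := by linarith
        nlinarith [mul_nonneg (sub_nonneg.mpr ih1) (sub_nonneg.mpr huφ)]
      · -- upper bound
        have h1 : φ (k + 1) z ≤ φ k z ^ 2 := by
          rw [hrec, hz2]
          nlinarith
        have h2 : φ k z ^ 2 ≤ ((2 : ℝ) ^ (2 ^ k - 1)) ^ 2 := by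
          apply pow_le_pow_left₀ (le_of_lt hφpos) ih2
        have h3 : ((2 : ℝ) ^ (2 ^ k - 1)) ^ 2 ≤ 2 ^ (2 ^ (k + 1) - 1) := by
          rw [← pow_mul]
          apply pow_le_pow_right₀ (by norm_num)
          have : 1 ≤ 2 ^ k := Nat.one_le_two_pow
          have : 2 ^ (k + 1) = 2 * 2 ^ k := by ring
          omega
        linarith
  -- Bound |log φ (k+1) z| ≤ 2^(k+1) * C
  set C : ℝ := Real.log 2 + |Real.log z| with hC
  have hC0 : 0 ≤ C := by positivity
  have hbound : ∀ k : ℕ,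
      |Real.log (φ (k + 1) z) / 3 ^ (k + 1)| ≤ C * (2 / 3) ^ (k + 1) := by
    intro k
    obtain ⟨h1, h2⟩ := key (k + 1) (by omega)
    have hlz : Real.log z ≤ 0 := Real.log_nonpos (le_of_lt hz0) hz1
    have habs : |Real.log z| = -Real.log z := abs_of_nonpos hlz
    have hφpos : 0 < φ (k + 1) z := lt_of_lt_of_le (by positivity) h1
    -- upper bound on log
    have hup : Real.log (φ (k + 1) z) ≤ (2 ^ (k + 1) : ℝ) * Real.log 2 := by
      calc Real.log (φ (k + 1) z) ≤ Real.log (2 ^ (2 ^ (k + 1) - 1)) :=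
            Real.log_le_log hφpos h2
        _ = ((2 ^ (k + 1) - 1 : ℕ) : ℝ) * Real.log 2 := by rw [Real.log_pow]
        _ ≤ (2 ^ (k + 1) : ℝ) * Real.log 2 := by
            apply mul_le_mul_of_nonneg_right _ (Real.log_nonneg (by norm_num))
            have : (1 : ℕ) ≤ 2 ^ (k + 1) := Nat.one_le_two_pow
            push_cast [this]
            push_cast
            linarith [Nat.one_le_two_pow (n := k + 1)]
    -- lower bound on log
    have hlo : (2 ^ (k + 1) : ℝ) * Real.log z ≤ Real.log (φ (k + 1) z) := by
      have : Real.log (2 * z ^ (2 ^ (k + 1 - 1))) ≤ Real.log (φ (k + 1) z) :=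
        Real.log_le_log (by positivity) h1
      rw [Real.log_mul (by norm_num) (by positivity), Real.log_pow] at this
      have hl2 : 0 ≤ Real.log 2 := Real.log_nonneg (by norm_num)
      have hle : (2 : ℕ) ^ (k + 1 - 1) ≤ 2 ^ (k + 1) := Nat.pow_le_pow_right (by norm_num) (by omega)
      have : ((2 ^ (k + 1 - 1) : ℕ) : ℝ) * Real.log z ≤ Real.log (φ (k + 1) z) := by
        linarith
      calc (2 ^ (k + 1) : ℝ) * Real.log z ≤ ((2 ^ (k + 1 - 1) : ℕ) : ℝ) * Real.log z := by
            apply mul_le_mul_of_nonpos_right _ hlz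
            have : ((2 : ℕ) ^ (k + 1 - 1) : ℝ) ≤ ((2 : ℕ) ^ (k + 1) : ℝ) := by exact_mod_cast hle
            push_cast at this ⊢
            linarith
        _ ≤ Real.log (φ (k + 1) z) := this
    have habslog : |Real.log (φ (k + 1) z)| ≤ (2 ^ (k + 1) : ℝ) * C := by
      rw [abs_le]
      constructor
      · have hl2 : 0 ≤ Real.log 2 := Real.log_nonneg (by norm_num)
        have h2p : (0 : ℝ) ≤ (2 : ℝ) ^ (k + 1) := by positivity
        have := hlo
        rw [hC, habs]
        nlinarith
      · rw [hC, habs]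
        have h2p : (0 : ℝ) ≤ (2 : ℝ) ^ (k + 1) := by positivity
        nlinarith
    have h3p : (0 : ℝ) < (3 : ℝ) ^ (k + 1) := by positivity
    rw [abs_div, abs_of_pos h3p, div_le_iff₀ h3p]
    calc |Real.log (φ (k + 1) z)| ≤ (2 ^ (k + 1) : ℝ) * C := habslog
      _ = C * (2 / 3) ^ (k + 1) * 3 ^ (k + 1) := by
          rw [div_pow]
          field_simp
  apply Summable.of_nonneg_of_le (fun k => abs_nonneg _) hbound
  have : (fun k : ℕ => C * (2 / 3 : ℝ) ^ (k + 1)) =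
      fun k : ℕ => (C * (2 / 3)) * (2 / 3 : ℝ) ^ k := by
    funext k
    ring
  rw [this]
  exact (summable_geometric_of_lt_one (by norm_num) (by norm_num)).mul_left _
end

section
/- Fix a real z ∈ (0,1]. Define Γ : ℕ → ℝ and Υ : ℕ → ℝ (indexed by n ≥ 1) by Γ₁ = 1 + z³, Υ₁ = z² + z, and for n ≥ 1: Γ_{n+1} = Γ_n³ + z³·Υ_n³ and Υ_{n+1} = z·Υ_n²·Γ_n + z²·Υ_n³. Then the sequence (log Γ_n)/3^n converges as n → ∞. -/
open Filter

theorem hanoi_thermodynamic_limit (z : ℝ) (hz : z ∈ Set.Ioc (0 : ℝ) 1)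
    (Γ Υ : ℕ → ℝ)
    (hΓ1 : Γ 1 = 1 + z ^ 3) (hΥ1 : Υ 1 = z ^ 2 + z)
    (hΓ : ∀ n : ℕ, 1 ≤ n → Γ (n + 1) = Γ n ^ 3 + z ^ 3 * Υ n ^ 3)
    (hΥ : ∀ n : ℕ, 1 ≤ n → Υ (n + 1) = z * Υ n ^ 2 * Γ n + z ^ 2 * Υ n ^ 3) :
    ∃ L : ℝ, Tendsto (fun n : ℕ => Real.log (Γ n) / 3 ^ n) atTop (nhds L) := by
  obtain ⟨hz0, hz1⟩ := hz
  -- invariant: 1 ≤ Γ n, 0 ≤ Υ n ≤ Γ n for n ≥ 1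
  have key : ∀ n : ℕ, 1 ≤ n → 1 ≤ Γ n ∧ 0 ≤ Υ n ∧ Υ n ≤ Γ n := by
    intro n hn
    induction n with
    | zero => omega
    | succ m ih =>
      rcases Nat.lt_or_ge m 1 with h | hm
      · have hm0 : m = 0 := by omega
        subst hm0
        refine ⟨by rw [hΓ1]; nlinarith, by rw [hΥ1]; nlinarith, ?_⟩
        rw [hΓ1, hΥ1]; nlinarith [sq_nonneg (1 - z)]
      · obtain ⟨h1, h2, h3⟩ := ih hm
        have hΓm := hΓ m hm
        have hΥm := hΥ m hm
        have hΓpos : (0:ℝ) < Γ m := by linarith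
        have hsq : Υ m ^ 2 ≤ Γ m ^ 2 := pow_le_pow_left₀ h2 h3 2
        have hcu : Υ m ^ 3 ≤ Γ m ^ 3 := pow_le_pow_left₀ h2 h3 3
        have t1 : 0 ≤ z * Γ m * (Γ m ^ 2 - Υ m ^ 2) := by
          apply mul_nonneg (by positivity); linarith
        have t2 : 0 ≤ (1 - z) * (Γ m ^ 3 - z ^ 2 * Υ m ^ 3) := by
          apply mul_nonneg (by linarith)
          have hz2 : z ^ 2 ≤ 1 := by nlinarith
          have := mul_le_mul_of_nonneg_right hz2 (pow_nonneg h2 3)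
          nlinarith
        refine ⟨?_, ?_, ?_⟩
        · rw [hΓm]
          have h13 : (1:ℝ) ^ 3 ≤ Γ m ^ 3 := pow_le_pow_left₀ (by norm_num) h1 3
          nlinarith [mul_nonneg (mul_nonneg (mul_nonneg hz0.le hz0.le) hz0.le) (pow_nonneg h2 3)]
        · rw [hΥm]; positivity
        · rw [hΓm, hΥm]; nlinarith [t1, t2]
  -- growth bounds for n ≥ 1
  have hlog : ∀ n : ℕ, 1 ≤ n →
      3 * Real.log (Γ n) ≤ Real.log (Γ (n + 1)) ∧
      Real.log (Γ (n + 1)) ≤ Real.log 2 + 3 * Real.log (Γ n) := by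
    intro n hn
    obtain ⟨h1, h2, h3⟩ := key n hn
    have hΓpos : (0:ℝ) < Γ n := by linarith
    have hΓn := hΓ n hn
    have hcu : Υ n ^ 3 ≤ Γ n ^ 3 := pow_le_pow_left₀ h2 h3 3
    have hz3 : z ^ 3 * Υ n ^ 3 ≤ Γ n ^ 3 := by
      have hz31 : z ^ 3 ≤ 1 := pow_le_one₀ hz0.le hz1
      have := mul_le_mul_of_nonneg_right hz31 (pow_nonneg h2 3)
      nlinarith
    have hz3' : 0 ≤ z ^ 3 * Υ n ^ 3 := by positivity
    have hlow : Γ n ^ 3 ≤ Γ (n + 1) := by rw [hΓn]; linarith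
    have hhigh : Γ (n + 1) ≤ 2 * Γ n ^ 3 := by rw [hΓn]; linarith
    have hp3 : (0:ℝ) < Γ n ^ 3 := by positivity
    constructor
    · have := Real.log_le_log hp3 hlow
      rwa [Real.log_pow, Nat.cast_ofNat] at this
    · have hpos' : (0:ℝ) < Γ (n + 1) := lt_of_lt_of_le hp3 hlow
      have := Real.log_le_log hpos' hhigh
      rw [Real.log_mul (by norm_num) (ne_of_gt hp3), Real.log_pow, Nat.cast_ofNat] at this
      linarith
  -- Cauchy via geometric bound
  set f : ℕ → ℝ := fun n => Real.log (Γ n) / 3 ^ n with hf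
  have hdist : ∀ n : ℕ, 1 ≤ n → dist (f n) (f (n + 1)) ≤ Real.log 2 * (1 / 3) ^ n := by
    intro n hn
    obtain ⟨hl, hh⟩ := hlog n hn
    have h3n : (0:ℝ) < 3 ^ n := by positivity
    rw [Real.dist_eq, hf]
    simp only
    rw [abs_sub_comm, abs_of_nonneg]
    · have : Real.log (Γ (n + 1)) / 3 ^ (n + 1) - Real.log (Γ n) / 3 ^ n
          = (Real.log (Γ (n + 1)) - 3 * Real.log (Γ n)) / 3 ^ (n + 1) := by
        field_simp; ring
      rw [this]
      have hr : Real.log 2 * (1/3:ℝ)^n = (3 * Real.log 2) / 3^(n+1) := by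
        rw [div_pow, one_pow, pow_succ]; field_simp
      rw [hr]
      have hlog2 : (0:ℝ) ≤ Real.log 2 := Real.log_nonneg (by norm_num)
      gcongr
      linarith
    · have : Real.log (Γ (n + 1)) / 3 ^ (n + 1) - Real.log (Γ n) / 3 ^ n
          = (Real.log (Γ (n + 1)) - 3 * Real.log (Γ n)) / 3 ^ (n + 1) := by
        field_simp; ring
      rw [this]
      apply div_nonneg (by linarith) (by positivity)
  set C : ℝ := max (Real.log 2) (dist (f 0) (f 1)) with hC
  have hcauchy : CauchySeq f := by
    apply cauchySeq_of_le_geometric (1/3 : ℝ) C (by norm_num)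
    intro n
    rcases Nat.eq_zero_or_pos n with h0 | h1
    · subst h0
      calc dist (f 0) (f (0 + 1)) ≤ C := le_max_right _ _
        _ = C * (1/3 : ℝ) ^ 0 := by norm_num
    · calc dist (f n) (f (n + 1)) ≤ Real.log 2 * (1 / 3) ^ n := hdist n h1
        _ ≤ C * (1 / 3) ^ n := by
            apply mul_le_mul_of_nonneg_right (le_max_left _ _) (by positivity)
  exact cauchySeq_tendsto_of_complete hcauchy
end

section
/- Fix a real z > 0. Define sequences Γ, Υ : ℕ → ℝ (indexed by n ≥ 1) by Γ₁ = 1 + z³, Υ₁ = z² + z, and for n ≥ 1: Γ_{n+1} = Γ_n³ + Υ_n³ and Υ_{n+1} = Υ_n²·Γ_n + Υ_n³. Define ψ : ℕ → ℝ by ψ₁ = (z+1)/z^(1/2), ψ₂ = (z²+1)/z, and ψ_{k+1} = ψ_k² − 3ψ_k + 4 for k ≥ 2. Then for all n ≥ 1: Γ_n = z^(3^n/2) · ∏_{k=1}^n ψ_k^(3^(n−k)) · (ψ_{n+1} − 1) and Υ_n = z^(3^n/2) · ∏_{k=1}^n ψ_k^(3^(n−k)), where z^(3^n/2) denotes the real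 power (3^n)/2 of z. -/
theorem sierpinski_generating_function_closed_form (z : ℝ) (hz : 0 < z)
    (Γ Υ ψ : ℕ → ℝ)
    (hΓ1 : Γ 1 = 1 + z ^ 3) (hΥ1 : Υ 1 = z ^ 2 + z)
    (hΓ : ∀ n : ℕ, 1 ≤ n → Γ (n + 1) = Γ n ^ 3 + Υ n ^ 3)
    (hΥ : ∀ n : ℕ, 1 ≤ n → Υ (n + 1) = Υ n ^ 2 * Γ n + Υ n ^ 3)
    (hψ1 : ψ 1 = (z + 1) / z ^ ((1 : ℝ) / 2))
    (hψ2 : ψ 2 = (z ^ 2 + 1) / z)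
    (hψ : ∀ k : ℕ, 2 ≤ k → ψ (k + 1) = ψ k ^ 2 - 3 * ψ k + 4) :
    ∀ n : ℕ, 1 ≤ n →
      Γ n = z ^ ((3 ^ n : ℝ) / 2) * (∏ k ∈ Finset.Icc 1 n, ψ k ^ (3 ^ (n - k))) *
        (ψ (n + 1) - 1) ∧
      Υ n = z ^ ((3 ^ n : ℝ) / 2) * ∏ k ∈ Finset.Icc 1 n, ψ k ^ (3 ^ (n - k)) := by
  set P : ℕ → ℝ := fun n => z ^ ((3 ^ n : ℝ) / 2) * ∏ k ∈ Finset.Icc 1 n, ψ k ^ (3 ^ (n - k))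
    with hP
  have hzhalf : (0 : ℝ) < z ^ ((1 : ℝ) / 2) := Real.rpow_pos_of_pos hz _
  have hsq : z ^ ((1 : ℝ) / 2) * z ^ ((1 : ℝ) / 2) = z := by
    rw [← Real.rpow_add hz, ← Real.rpow_one z]; norm_num
  have hPstep : ∀ n : ℕ, P (n + 1) = P n ^ 3 * ψ (n + 1) := by
    intro n
    have hrpow : z ^ ((3 ^ (n + 1) : ℝ) / 2) = (z ^ ((3 ^ n : ℝ) / 2)) ^ 3 := by
      rw [← Real.rpow_natCast (z ^ ((3 ^ n : ℝ) / 2)) 3, ← Real.rpow_mul hz.le]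
      push_cast
      ring_nf
    have hprod : (∏ k ∈ Finset.Icc 1 (n + 1), ψ k ^ (3 ^ (n + 1 - k)))
        = (∏ k ∈ Finset.Icc 1 n, ψ k ^ (3 ^ (n - k))) ^ 3 * ψ (n + 1) := by
      rw [Finset.prod_Icc_succ_top (by omega : 1 ≤ n + 1)]
      simp only [Nat.sub_self, pow_zero, pow_one]
      congr 1
      rw [← Finset.prod_pow]
      apply Finset.prod_congr rfl
      intro k hk
      have hk' : k ≤ n := (Finset.mem_Icc.mp hk).2
      rw [← pow_mul]
      congr 1
      have : n + 1 - k = (n - k) + 1 := by omega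
      rw [this, pow_succ]
    simp only [hP, hrpow, hprod]
    ring
  intro n hn
  induction n, hn using Nat.le_induction with
  | base =>
    have hP1 : P 1 = z ^ 2 + z := by
      have h32 : z ^ ((3 : ℝ) / 2) = z * z ^ ((1 : ℝ) / 2) := by
        rw [show (3 : ℝ) / 2 = 1 + 1 / 2 by norm_num, Real.rpow_add hz, Real.rpow_one]
      simp only [hP, Finset.Icc_self, Finset.prod_singleton, Nat.sub_self, pow_zero, pow_one,
        hψ1]
      rw [h32]
      field_simp
    refine ⟨?_, by rw [hΥ1, ← hP1]⟩
    show Γ 1 = P 1 * (ψ 2 - 1)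
    rw [hP1, hΓ1, hψ2]
    field_simp
    ring
  | succ n hn ih =>
    obtain ⟨ihΓ, ihΥ⟩ := ih
    have hΓn : Γ n = P n * (ψ (n + 1) - 1) := ihΓ
    have hΥn : Υ n = P n := ihΥ
    have hψn2 : ψ (n + 2) = ψ (n + 1) ^ 2 - 3 * ψ (n + 1) + 4 := hψ (n + 1) (by omega)
    have hΥs : Υ (n + 1) = P (n + 1) := by
      rw [hΥ n hn, hΥn, hΓn, hPstep n]
      ring
    constructor
    · show Γ (n + 1) = P (n + 1) * (ψ (n + 1 + 1) - 1)
      rw [hΓ n hn, hΓn, hΥn, hPstep n, show n + 1 + 1 = n + 2 from rfl, hψn2]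
      ring
    · exact hΥs
end

section
/- Fix a real z ∈ (0,1]. Define Γ : ℕ → ℝ and Υ : ℕ → ℝ (indexed by n ≥ 1) by Γ₁ = 1 + z³, Υ₁ = z² + z, and for n ≥ 1: Γ_{n+1} = Γ_n³ + Υ_n³ and Υ_{n+1} = Υ_n²·Γ_n + Υ_n³. Then the sequence (log Γ_n)/3^n converges as n → ∞. -/
/-!
The recursion preserves `0 < Υ n ≤ Γ n`, so `Γ n ^ 3 ≤ Γ (n + 1) ≤ 2 * Γ n ^ 3`. Hence consecutive
terms of `log (Γ n) / 3 ^ n` differ by at most `log 2 / 3 ^ (n + 1)`, a summable bound, and the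
sequence is Cauchy.
-/

open Filter Topology

theorem exists_tendsto_div_pow_of_abs_sub_mul_le {f : ℕ → ℝ} {k M : ℝ} (hk : 1 < k) (N : ℕ)
    (h : ∀ n ≥ N, |f (n + 1) - k * f n| ≤ M) :
    ∃ L, Tendsto (fun n => f n / k ^ n) atTop (𝓝 L) := by
  have hk0 : 0 < k := zero_lt_one.trans hk
  set g : ℕ → ℝ := fun n => f (n + N) / k ^ (n + N)
  have hdist : ∀ n, dist (g n) (g (n + 1)) ≤ M / k ^ (N + 1) * k⁻¹ ^ n := by
    intro n
    have hpow : 0 < k ^ (n + N + 1) := by positivity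
    have hsucc : g (n + 1) = f (n + N + 1) / k ^ (n + N + 1) := by
      simp only [g, Nat.add_right_comm n 1 N]
    calc dist (g n) (g (n + 1)) = |f (n + N + 1) - k * f (n + N)| / k ^ (n + N + 1) := by
          rw [Real.dist_eq, abs_sub_comm, hsucc, ← abs_of_pos hpow, ← abs_div,
            abs_of_pos hpow]
          congr 1
          simp only [g, pow_succ]
          field_simp
      _ ≤ M / k ^ (n + N + 1) := by gcongr; exact h _ (Nat.le_add_left N n)
      _ = M / k ^ (N + 1) * k⁻¹ ^ n := by
          rw [inv_pow, ← div_eq_mul_inv, div_div, ← pow_add]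
          ring_nf
  have hsum : Summable fun n => M / k ^ (N + 1) * k⁻¹ ^ n :=
    (summable_geometric_of_lt_one (by positivity) (inv_lt_one_of_one_lt₀ hk)).mul_left _
  obtain ⟨L, hL⟩ := cauchySeq_tendsto_of_complete (cauchySeq_of_dist_le_of_summable _ hdist hsum)
  exact ⟨L, (tendsto_add_atTop_iff_nat N).1 hL⟩

theorem abs_log_sub_natCast_mul_log_le {x y C : ℝ} (k : ℕ) (hx : 0 < x) (hlow : x ^ k ≤ y)
    (hhigh : y ≤ C * x ^ k) : |Real.log y - k * Real.log x| ≤ Real.log C := by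
  have hxk : 0 < x ^ k := pow_pos hx k
  have hy : 0 < y := hxk.trans_le hlow
  rw [← Real.log_pow, ← Real.log_div hy.ne' hxk.ne',
    abs_of_nonneg (Real.log_nonneg ((one_le_div hxk).2 hlow))]
  exact Real.log_le_log (div_pos hy hxk) ((div_le_iff₀ hxk).2 hhigh)

theorem sierpinski_step_pos_le {g u : ℝ} (hu : 0 < u) (hug : u ≤ g) :
    0 < u ^ 2 * g + u ^ 3 ∧ u ^ 2 * g + u ^ 3 ≤ g ^ 3 + u ^ 3 := by
  have hg : 0 < g := hu.trans_le hug
  refine ⟨by positivity, ?_⟩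
  have : u ^ 2 * g ≤ g ^ 2 * g := by gcongr
  nlinarith

theorem sierpinski_thermodynamic_limit (z : ℝ) (hz : z ∈ Set.Ioc (0 : ℝ) 1)
    (Γ Υ : ℕ → ℝ)
    (hΓ1 : Γ 1 = 1 + z ^ 3) (hΥ1 : Υ 1 = z ^ 2 + z)
    (hΓ : ∀ n : ℕ, 1 ≤ n → Γ (n + 1) = Γ n ^ 3 + Υ n ^ 3)
    (hΥ : ∀ n : ℕ, 1 ≤ n → Υ (n + 1) = Υ n ^ 2 * Γ n + Υ n ^ 3) :
    ∃ L : ℝ, Tendsto (fun n : ℕ => Real.log (Γ n) / 3 ^ n) atTop (nhds L) := by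
  obtain ⟨hz0, hz1⟩ := hz
  have hinv : ∀ n ≥ 1, 0 < Υ n ∧ Υ n ≤ Γ n := by
    intro n hn
    induction n, hn using Nat.le_induction with
    | base =>
      rw [hΓ1, hΥ1]
      -- `1 + z ^ 3 - (z ^ 2 + z) = (1 - z) ^ 2 * (1 + z)`
      exact ⟨by positivity, by nlinarith [mul_nonneg (sq_nonneg (1 - z)) hz0.le]⟩
    | succ n hn ih =>
      rw [hΓ n hn, hΥ n hn]
      exact sierpinski_step_pos_le ih.1 ih.2
  refine exists_tendsto_div_pow_of_abs_sub_mul_le (M := Real.log 2) (by norm_num : (1 : ℝ) < 3) 1 fun n hn => ?_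
  obtain ⟨hu, hug⟩ := hinv n hn
  have hcube : Υ n ^ 3 ≤ Γ n ^ 3 := pow_le_pow_left₀ hu.le hug 3
  rw [hΓ n hn]
  exact_mod_cast abs_log_sub_natCast_mul_log_le (C := 2) 3 (hu.trans_le hug)
    (le_add_of_nonneg_right (by positivity)) (by linarith)
end

section
/- Fix a real number c. Define four sequences Γ, L, R, U : ℕ → ℝ (indexed by n ≥ 1) by Γ₁ = L₁ = R₁ = U₁ = 1 + c, and for n ≥ 1: Γ_{n+1} = Γ_n³ + c·L_n·U_n·R_n; U_{n+1} = L_n·R_n·Γ_n + c·U_n³; R_{n+1} = c·U_n·L_n·Γ_n + R_n³; L_{n+1} = U_n·R_n·Γ_n + c·L_n³. Then for all n ≥ 1: Γ_n = L_n = R_n = U_n = (1 + c)^((3^n − 1)/2). -/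
theorem hanoi_weighted_generating_functions (c : ℝ)
    (Γ L R U : ℕ → ℝ)
    (hΓ1 : Γ 1 = 1 + c) (hL1 : L 1 = 1 + c) (hR1 : R 1 = 1 + c) (hU1 : U 1 = 1 + c)
    (hΓ : ∀ n : ℕ, 1 ≤ n → Γ (n + 1) = Γ n ^ 3 + c * L n * U n * R n)
    (hU : ∀ n : ℕ, 1 ≤ n → U (n + 1) = L n * R n * Γ n + c * U n ^ 3)
    (hR : ∀ n : ℕ, 1 ≤ n → R (n + 1) = c * U n * L n * Γ n + R n ^ 3)
    (hL : ∀ n : ℕ, 1 ≤ n → L (n + 1) = U n * R n * Γ n + c * L n ^ 3) :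
    ∀ n : ℕ, 1 ≤ n →
      Γ n = (1 + c) ^ ((3 ^ n - 1) / 2) ∧ L n = (1 + c) ^ ((3 ^ n - 1) / 2) ∧
      R n = (1 + c) ^ ((3 ^ n - 1) / 2) ∧ U n = (1 + c) ^ ((3 ^ n - 1) / 2) := by
  intro n hn
  induction n with
  | zero => omega
  | succ m ih =>
    rcases Nat.eq_or_lt_of_le hn with h | h
    · have hm0 : m = 0 := by omega
      subst hm0
      simp [hΓ1, hL1, hR1, hU1]
    · have hm : 1 ≤ m := by omega
      obtain ⟨hG, hLm, hRm, hUm⟩ := ih hm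
      have hmod : 3 ^ m % 2 = 1 := by
        rw [Nat.pow_mod]; simp
      have hpow : (3:ℕ) ^ (m+1) = 3 * 3 ^ m := by ring
      have hexp : (3 ^ (m+1) - 1) / 2 = 3 * ((3 ^ m - 1) / 2) + 1 := by omega
      set k := (3 ^ m - 1) / 2
      have key : ∀ x : ℝ, x = (1+c)^k → x^3 + c * ((1+c)^k * (1+c)^k * (1+c)^k) = (1+c)^(3*k+1) := by
        intro x hx
        rw [hx]
        ring
      refine ⟨?_, ?_, ?_, ?_⟩
      · rw [hΓ m hm, hG, hLm, hUm, hRm, hexp]; ring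
      · rw [hL m hm, hG, hLm, hUm, hRm, hexp]; ring
      · rw [hR m hm, hG, hLm, hUm, hRm, hexp]; ring
      · rw [hU m hm, hG, hLm, hUm, hRm, hexp]; ring
end

section
/- Fix a real number c. Define four sequences Γ, L, R, U : ℕ → ℝ (indexed by n ≥ 1) by Γ₁ = L₁ = R₁ = U₁ = 1 + c, and for n ≥ 1: Γ_{n+1} = Γ_n³ + L_n·U_n·R_n; U_{n+1} = L_n·R_n·Γ_n + U_n³; R_{n+1} = U_n·L_n·Γ_n + R_n³; L_{n+1} = U_n·R_n·Γ_n + L_n³. Then for all n ≥ 1: Γ_n = L_n = R_n = U_n = 2^((3^(n−1) − 1)/2) · (1 + c)^(3^(n−1)). -/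
lemma sierp_exp_aux (m : ℕ) : (3 ^ (m + 1) - 1) / 2 = 3 * ((3 ^ m - 1) / 2) + 1 := by
  have h1 : 3 ^ (m + 1) = 3 * 3 ^ m := by ring
  have h2 : 3 ^ m % 2 = 1 := by
    have := Nat.pow_mod 3 m 2
    simpa using this
  have h3 : 1 ≤ 3 ^ m := Nat.one_le_pow _ _ (by norm_num)
  omega

theorem sierpinski_weighted_generating_functions (c : ℝ)
    (Γ L R U : ℕ → ℝ)
    (hΓ1 : Γ 1 = 1 + c) (hL1 : L 1 = 1 + c) (hR1 : R 1 = 1 + c) (hU1 : U 1 = 1 + c)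
    (hΓ : ∀ n : ℕ, 1 ≤ n → Γ (n + 1) = Γ n ^ 3 + L n * U n * R n)
    (hU : ∀ n : ℕ, 1 ≤ n → U (n + 1) = L n * R n * Γ n + U n ^ 3)
    (hR : ∀ n : ℕ, 1 ≤ n → R (n + 1) = U n * L n * Γ n + R n ^ 3)
    (hL : ∀ n : ℕ, 1 ≤ n → L (n + 1) = U n * R n * Γ n + L n ^ 3) :
    ∀ n : ℕ, 1 ≤ n →
      Γ n = 2 ^ ((3 ^ (n - 1) - 1) / 2) * (1 + c) ^ (3 ^ (n - 1)) ∧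
      L n = 2 ^ ((3 ^ (n - 1) - 1) / 2) * (1 + c) ^ (3 ^ (n - 1)) ∧
      R n = 2 ^ ((3 ^ (n - 1) - 1) / 2) * (1 + c) ^ (3 ^ (n - 1)) ∧
      U n = 2 ^ ((3 ^ (n - 1) - 1) / 2) * (1 + c) ^ (3 ^ (n - 1)) := by
  intro n hn
  induction n, hn using Nat.le_induction with
  | base => simp [hΓ1, hL1, hR1, hU1]
  | succ n hn ih =>
    obtain ⟨hΓn, hLn, hRn, hUn⟩ := ih
    set e := (3 ^ (n - 1) - 1) / 2 with he
    set p := (3 : ℕ) ^ (n - 1) with hp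
    have hn1 : n + 1 - 1 = n := rfl
    have hnn : n = (n - 1) + 1 := (Nat.succ_pred_eq_of_pos hn).symm
    have hexp : (3 ^ n - 1) / 2 = 3 * e + 1 := by
      rw [hnn]; exact sierp_exp_aux (n - 1)
    have hpow : (3 : ℕ) ^ n = 3 * p := by
      rw [hnn, hp]; ring
    have key : (2 : ℝ) ^ e * (1 + c) ^ p * ((2 : ℝ) ^ e * (1 + c) ^ p)
          * ((2 : ℝ) ^ e * (1 + c) ^ p) + (2 ^ e * (1 + c) ^ p) ^ 3
        = 2 ^ ((3 ^ n - 1) / 2) * (1 + c) ^ (3 ^ n) := by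
      rw [hexp, hpow]
      ring
    refine ⟨?_, ?_, ?_, ?_⟩ <;>
      simp only [hn1] <;>
      [rw [hΓ n hn]; rw [hL n hn]; rw [hR n hn]; rw [hU n hn]] <;>
      rw [hΓn, hLn, hRn, hUn] <;>
      linarith [key]
end

section
/- Fix real numbers a, b, c > 0 and set D = (a + bc)(b + ac). Define sequences Γ, Υ : ℕ → ℝ (indexed by n ≥ 2) by Γ₂ = (1+c)(1+ab)(a²b²c² − a²b²c + a²b² + 4abc − abc² − ab + c² − c + 1), Υ₂ = (1+c)(1+ab)(a+bc)(b+ac), and for n ≥ 3: Γ_n = Γ_{n−1}³ + Υ_{n−1}³ and Υ_n = Υ_{n−1}³ + Υ_{n−1}²·Γ_{n−1}. Define ψ₁ = (1+c)/D^(1/4), ψ₂ = (1+ab)/D^(1/2), ψ₃ = (a²b²c² − a²b²c + a²b² + 4abc + c² − c + 1 + a²c + b²c)/D, and ψ_k = ψ_{k−1}² − 3ψ_{k−1} + 4 for k ≥ 4. Then for all n ≥ 2: Γ_n = D^(7·3^(n−2)/4) · ψ₁^(3^(n−2)) · ∏_{k=2}^n ψ_k^(3^(n−k)) · (ψ_{n+1}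 − 1) and Υ_n = D^(7·3^(n−2)/4) · ψ₁^(3^(n−2)) · ∏_{k=2}^n ψ_k^(3^(n−k)), where real powers with non-integer exponents are taken of the positive real D. -/
theorem sierpinski_rotation_invariant_closed_form (a b c : ℝ)
    (ha : 0 < a) (hb : 0 < b) (hc : 0 < c)
    (D : ℝ) (hD : D = (a + b * c) * (b + a * c))
    (Γ Υ ψ : ℕ → ℝ)
    (hΓ2 : Γ 2 = (1 + c) * (1 + a * b) *
      (a ^ 2 * b ^ 2 * c ^ 2 - a ^ 2 * b ^ 2 * c + a ^ 2 * b ^ 2 + 4 * a * b * c -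
        a * b * c ^ 2 - a * b + c ^ 2 - c + 1))
    (hΥ2 : Υ 2 = (1 + c) * (1 + a * b) * (a + b * c) * (b + a * c))
    (hΓ : ∀ n : ℕ, 3 ≤ n → Γ n = Γ (n - 1) ^ 3 + Υ (n - 1) ^ 3)
    (hΥ : ∀ n : ℕ, 3 ≤ n → Υ n = Υ (n - 1) ^ 3 + Υ (n - 1) ^ 2 * Γ (n - 1))
    (hψ1 : ψ 1 = (1 + c) / D ^ ((1 : ℝ) / 4))
    (hψ2 : ψ 2 = (1 + a * b) / D ^ ((1 : ℝ) / 2))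
    (hψ3 : ψ 3 = (a ^ 2 * b ^ 2 * c ^ 2 - a ^ 2 * b ^ 2 * c + a ^ 2 * b ^ 2 +
      4 * a * b * c + c ^ 2 - c + 1 + a ^ 2 * c + b ^ 2 * c) / D)
    (hψ : ∀ k : ℕ, 4 ≤ k → ψ k = ψ (k - 1) ^ 2 - 3 * ψ (k - 1) + 4) :
    ∀ n : ℕ, 2 ≤ n →
      Γ n = D ^ ((7 * (3 : ℝ) ^ (n - 2)) / 4) * ψ 1 ^ (3 ^ (n - 2)) *
        (∏ k ∈ Finset.Icc 2 n, ψ k ^ (3 ^ (n - k))) * (ψ (n + 1) - 1) ∧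
      Υ n = D ^ ((7 * (3 : ℝ) ^ (n - 2)) / 4) * ψ 1 ^ (3 ^ (n - 2)) *
        ∏ k ∈ Finset.Icc 2 n, ψ k ^ (3 ^ (n - k)) := by
  have hDpos : 0 < D := by rw [hD]; positivity
  have h14 : (0:ℝ) < D ^ ((1:ℝ)/4) := Real.rpow_pos_of_pos hDpos _
  have h12 : (0:ℝ) < D ^ ((1:ℝ)/2) := Real.rpow_pos_of_pos hDpos _
  have hsplit : D ^ ((7:ℝ)/4) = D ^ ((1:ℝ)/4) * D ^ ((1:ℝ)/2) * D := by
    have h7 : D ^ ((7:ℝ)/4) = D ^ ((1:ℝ)/4 + (1:ℝ)/2 + 1) := by norm_num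
    rw [h7, Real.rpow_add hDpos, Real.rpow_add hDpos, Real.rpow_one]
  intro n hn
  induction n, hn using Nat.le_induction with
  | base =>
    have hicc : Finset.Icc 2 2 = {2} := Finset.Icc_self 2
    constructor
    · rw [hΓ2, hicc]
      simp only [Finset.prod_singleton, Nat.sub_self, pow_zero, pow_one]
      rw [hψ1, hψ2, hψ3]
      norm_num
      rw [hsplit]
      field_simp
      rw [hD]; ring
    · rw [hΥ2, hicc]
      simp only [Finset.prod_singleton, Nat.sub_self, pow_zero, pow_one]
      rw [hψ1, hψ2]
      norm_num
      rw [hsplit]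
      field_simp
      rw [hD]; ring
  | succ n hn ih =>
    obtain ⟨ihΓ, ihΥ⟩ := ih
    have hΓn1 := hΓ (n+1) (by omega)
    have hΥn1 := hΥ (n+1) (by omega)
    simp only [Nat.add_sub_cancel] at hΓn1 hΥn1
    have hψn2 := hψ (n+1+1) (by omega)
    simp only [Nat.add_sub_cancel] at hψn2
    have hE : D ^ ((7 * (3:ℝ) ^ (n+1-2))/4) = (D ^ ((7*(3:ℝ)^(n-2))/4))^(3:ℕ) := by
      rw [show n+1-2 = (n-2)+1 from by omega, ← Real.rpow_natCast (D ^ _) 3,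
        ← Real.rpow_mul hDpos.le]
      congr 1
      push_cast
      rw [pow_succ]
      ring
    have hS : ψ 1 ^ (3 ^ (n+1-2)) = (ψ 1 ^ (3 ^ (n-2)))^3 := by
      rw [show n+1-2 = (n-2)+1 from by omega, pow_succ, pow_mul]
    have hprod : ∏ k ∈ Finset.Icc 2 (n+1), ψ k ^ (3 ^ (n+1-k))
        = (∏ k ∈ Finset.Icc 2 n, ψ k ^ (3 ^ (n-k)))^3 * ψ (n+1) := by
      rw [Finset.prod_Icc_succ_top (by omega)]
      congr 1
      · rw [← Finset.prod_pow]
        refine Finset.prod_congr rfl fun k hk => ?_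
        have hk' : k ≤ n := (Finset.mem_Icc.mp hk).2
        rw [show n+1-k = (n-k)+1 from by omega, pow_succ, pow_mul]
      · rw [Nat.sub_self, pow_zero, pow_one]
    constructor
    · rw [hΓn1, ihΓ, ihΥ, hE, hS, hprod, hψn2]; ring
    · rw [hΥn1, ihΓ, ihΥ, hE, hS, hprod]; ring
end

section
/- Fix a real y > 1 and let z(y) = (y² − 1)/(y² + 1). Define Γ, Υ : ℕ → ℝ (indexed by n ≥ 1) by Γ₁ = 1 + z(y)³, Υ₁ = z(y)² + z(y), and for n ≥ 1: Γ_{n+1} = Γ_n³ + Υ_n³ and Υ_{n+1} = Υ_n²·Γ_n + Υ_n³. Set Z_n(y) = 2^((3^n + 3)/2) · ((y + y⁻¹)/2)^(3^n) · Γ_n. Then Z₁(y) = 2y³ + 6y⁻¹, and for all n ≥ 1: Z_{n+1}(y) = Z_n(f(y)) · c(y)^(3^(n−1)), where f(y) = ((y⁸ − y⁴ + 4)/(y⁴ + 3))^(1/4) and c(y) = ((y⁴ + 1)/y³) · ((y⁴ + 3)³(y⁸ − y⁴ + 4))^(1/4). -/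
/-- The pair `(Γ_{n+1}, Υ_{n+1})` of generating functions of the Sierpiński graphs
`Ω_{n+1}`, evaluated at `z` (index shifted by one: `sierpinskiPair z 0 = (Γ₁, Υ₁)`). -/
noncomputable def sierpinskiPair (z : ℝ) : ℕ → ℝ × ℝ
  | 0 => (1 + z ^ 3, z ^ 2 + z)
  | n + 1 =>
      ((sierpinskiPair z n).1 ^ 3 + (sierpinskiPair z n).2 ^ 3,
        (sierpinskiPair z n).2 ^ 2 * (sierpinskiPair z n).1 + (sierpinskiPair z n).2 ^ 3)

/-- The high-temperature variable `z = tanh(βJ)` in terms of `y = exp(βJ)`. -/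
noncomputable def sierpinskiZVar (y : ℝ) : ℝ := (y ^ 2 - 1) / (y ^ 2 + 1)

/-- Partition function of the Ising model on the `n`-th Sierpiński graph `Ω_n`,
in the variable `y = exp(βJ)`. -/
noncomputable def sierpinskiZ (n : ℕ) (y : ℝ) : ℝ :=
  2 ^ ((3 ^ n + 3) / 2) * ((y + y⁻¹) / 2) ^ (3 ^ n) *
    (sierpinskiPair (sierpinskiZVar y) (n - 1)).1

/-- The renormalization substitution for the Sierpiński gasket. -/
noncomputable def sierpinskiF (y : ℝ) : ℝ :=
  ((y ^ 8 - y ^ 4 + 4) / (y ^ 4 + 3)) ^ ((1 : ℝ) / 4)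

/-- The multiplicative factor in the renormalization recursion for the Sierpiński gasket. -/
noncomputable def sierpinskiC (y : ℝ) : ℝ :=
  ((y ^ 4 + 1) / y ^ 3) * ((y ^ 4 + 3) ^ 3 * (y ^ 8 - y ^ 4 + 4)) ^ ((1 : ℝ) / 4)

/-- The recursion defining `sierpinskiPair` is homogeneous of degree `3`, so an initial
proportionality propagates with exponent `3 ^ n`. -/
lemma sierpinskiPair_scale (z z' c : ℝ)
    (h : sierpinskiPair z' 0
      = (c * (sierpinskiPair z 1).1, c * (sierpinskiPair z 1).2)) :
    ∀ n : ℕ, sierpinskiPair z' n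
      = (c ^ 3 ^ n * (sierpinskiPair z (n + 1)).1,
         c ^ 3 ^ n * (sierpinskiPair z (n + 1)).2) := by
  intro n
  induction n with
  | zero => simpa using h
  | succ k ih =>
    have h3 : (3 : ℕ) ^ (k + 1) = 3 ^ k * 3 := by ring
    show ((sierpinskiPair z' k).1 ^ 3 + (sierpinskiPair z' k).2 ^ 3,
        (sierpinskiPair z' k).2 ^ 2 * (sierpinskiPair z' k).1 + (sierpinskiPair z' k).2 ^ 3) = _
    rw [ih]
    have : sierpinskiPair z (k + 1 + 1)
        = ((sierpinskiPair z (k + 1)).1 ^ 3 + (sierpinskiPair z (k + 1)).2 ^ 3,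
          (sierpinskiPair z (k + 1)).2 ^ 2 * (sierpinskiPair z (k + 1)).1
            + (sierpinskiPair z (k + 1)).2 ^ 3) := rfl
    rw [this, h3, pow_mul, Prod.mk.injEq]
    dsimp only
    constructor <;> ring

theorem sierpinski_renormalization (y : ℝ) (hy : 1 < y) :
    sierpinskiZ 1 y = 2 * y ^ 3 + 6 * y⁻¹ ∧
    ∀ n : ℕ, 1 ≤ n →
      sierpinskiZ (n + 1) y = sierpinskiZ n (sierpinskiF y) * sierpinskiC y ^ (3 ^ (n - 1)) := by
  have hy0 : (0 : ℝ) < y := lt_trans one_pos hy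
  have hyne : y ≠ 0 := ne_of_gt hy0
  have hy2 : y ^ 2 + 1 ≠ 0 := by positivity
  have hy43 : y ^ 4 + 3 ≠ 0 := by positivity
  have hy43' : (0 : ℝ) < y ^ 4 + 3 := by positivity
  have hy41 : y ^ 4 + 1 ≠ 0 := by positivity
  have hRpos : (0 : ℝ) < (y ^ 8 - y ^ 4 + 4) / (y ^ 4 + 3) := by
    apply div_pos _ hy43'
    nlinarith [sq_nonneg (y ^ 4 - 1)]
  have htpos : 0 < sierpinskiF y := Real.rpow_pos_of_pos hRpos _
  set t := sierpinskiF y with htdef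
  have htne : t ≠ 0 := ne_of_gt htpos
  have ht2 : t ^ 2 + 1 ≠ 0 := by positivity
  have ht4 : t ^ 4 = (y ^ 8 - y ^ 4 + 4) / (y ^ 4 + 3) := by
    rw [htdef, sierpinskiF, ← Real.rpow_natCast _ 4, ← Real.rpow_mul hRpos.le]
    norm_num
  set c := t ^ 2 * (y ^ 2 + 1) ^ 9
      / (8 * (t ^ 2 + 1) ^ 3 * (y ^ 4 + 3) * y ^ 6 * (y ^ 4 + 1)) with hcdef
  -- base proportionality
  have hbase : sierpinskiPair (sierpinskiZVar t) 0
      = (c * (sierpinskiPair (sierpinskiZVar y) 1).1,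
         c * (sierpinskiPair (sierpinskiZVar y) 1).2) := by
    have g1 : 1 + (sierpinskiZVar y) ^ 3 = 2 * y ^ 2 * (y ^ 4 + 3) / (y ^ 2 + 1) ^ 3 := by
      rw [sierpinskiZVar]; field_simp; ring
    have g2 : (sierpinskiZVar y) ^ 2 + sierpinskiZVar y
        = 2 * y ^ 2 * (y ^ 4 - 1) / (y ^ 2 + 1) ^ 3 := by
      rw [sierpinskiZVar]; field_simp; ring
    have e1 : 1 + (sierpinskiZVar t) ^ 3
        = 2 * t ^ 2 * ((y ^ 8 - y ^ 4 + 4) / (y ^ 4 + 3) + 3) / (t ^ 2 + 1) ^ 3 := by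
      rw [sierpinskiZVar, ← ht4]; field_simp; ring
    have e2 : (sierpinskiZVar t) ^ 2 + sierpinskiZVar t
        = 2 * t ^ 2 * ((y ^ 8 - y ^ 4 + 4) / (y ^ 4 + 3) - 1) / (t ^ 2 + 1) ^ 3 := by
      rw [sierpinskiZVar, ← ht4]; field_simp; ring
    have hp1 : sierpinskiPair (sierpinskiZVar y) 1
        = ((1 + (sierpinskiZVar y) ^ 3) ^ 3 + ((sierpinskiZVar y) ^ 2 + sierpinskiZVar y) ^ 3,
          ((sierpinskiZVar y) ^ 2 + sierpinskiZVar y) ^ 2 * (1 + (sierpinskiZVar y) ^ 3)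
            + ((sierpinskiZVar y) ^ 2 + sierpinskiZVar y) ^ 3) := rfl
    have hp0 : sierpinskiPair (sierpinskiZVar t) 0
        = (1 + (sierpinskiZVar t) ^ 3, (sierpinskiZVar t) ^ 2 + sierpinskiZVar t) := rfl
    rw [hp0, hp1, g1, g2, e1, e2, hcdef, Prod.mk.injEq]
    constructor <;> (field_simp; ring)
  have hscale := sierpinskiPair_scale _ _ _ hbase
  -- closed form for sierpinskiC
  have hC : sierpinskiC y = (y ^ 4 + 1) / y ^ 3 * ((y ^ 4 + 3) * t) := by
    have h4 : (y ^ 4 + 3) ^ 3 * (y ^ 8 - y ^ 4 + 4) = ((y ^ 4 + 3) * t) ^ 4 := by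
      rw [mul_pow, ht4]; field_simp
    have hb : (0 : ℝ) ≤ (y ^ 4 + 3) * t := by positivity
    rw [sierpinskiC, h4, ← Real.rpow_natCast ((y ^ 4 + 3) * t) 4, ← Real.rpow_mul hb]
    norm_num
  -- key scalar identity
  have key : (8 : ℝ) * ((y + y⁻¹) / 2) ^ 9
      = ((t + t⁻¹) / 2) ^ 3 * c * sierpinskiC y := by
    rw [hC, hcdef]; field_simp; ring
  constructor
  · show (2 : ℝ) ^ 3 * ((y + y⁻¹) / 2) ^ 3 * (1 + (sierpinskiZVar y) ^ 3)
        = 2 * y ^ 3 + 6 * y⁻¹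
    rw [sierpinskiZVar]
    field_simp
    ring
  · intro n hn
    obtain ⟨m, rfl⟩ : ∃ m, n = m + 1 := ⟨n - 1, (Nat.succ_pred_eq_of_pos hn).symm⟩
    have hidx : m + 1 - 1 = m := rfl
    have hE : (3 ^ (m + 2) + 3) / 2 = (3 ^ (m + 1) + 3) / 2 + 3 ^ (m + 1) := by
      have h3 : (3 : ℕ) ^ (m + 2) = 3 ^ (m + 1) * 3 := pow_succ 3 (m + 1)
      have hodd : Odd ((3 : ℕ) ^ (m + 1)) := Odd.pow (by decide)
      obtain ⟨k, hk⟩ := hodd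
      omega
    have hmain : (2 : ℝ) ^ 3 ^ (m + 1) * ((y + y⁻¹) / 2) ^ 3 ^ (m + 2)
        = ((t + t⁻¹) / 2) ^ 3 ^ (m + 1) * c ^ 3 ^ m * sierpinskiC y ^ 3 ^ m := by
      have e9 : (3 : ℕ) ^ (m + 2) = 9 * 3 ^ m := by ring
      have e3 : (3 : ℕ) ^ (m + 1) = 3 * 3 ^ m := by ring
      rw [e9, e3, pow_mul, pow_mul, pow_mul, ← mul_pow, ← mul_pow, ← mul_pow]
      congr 1
      linear_combination key
    show (2 : ℝ) ^ ((3 ^ (m + 2) + 3) / 2) * ((y + y⁻¹) / 2) ^ 3 ^ (m + 2)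
          * (sierpinskiPair (sierpinskiZVar y) (m + 2 - 1)).1
        = (2 : ℝ) ^ ((3 ^ (m + 1) + 3) / 2) * ((t + t⁻¹) / 2) ^ 3 ^ (m + 1)
          * (sierpinskiPair (sierpinskiZVar t) (m + 1 - 1)).1
          * sierpinskiC y ^ 3 ^ (m + 1 - 1)
    rw [show m + 2 - 1 = m + 1 from rfl, show m + 1 - 1 = m from rfl, hscale m]
    rw [hE, pow_add]
    simp only []
    linear_combination ((2 : ℝ) ^ ((3 ^ (m + 1) + 3) / 2)
      * (sierpinskiPair (sierpinskiZVar y) (m + 1)).1) * hmain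
end

section
/- Fix a real z > 0 and define ψ : ℕ → ℝ (indexed by k ≥ 1) by ψ₁ = (z+1)/z and ψ_{k+1} = ψ_k² − 3ψ_k + 4. Then for all n ≥ 1: (z^(3^n) · ∏_{k=1}^n ψ_k^(3^(n−k)) · (ψ_{n+1} − 1))³ + z³·(z^(3^n − 1) · ∏_{k=1}^n ψ_k^(3^(n−k)))³ = z^(3^(n+1)) · ∏_{k=1}^{n+1} ψ_k^(3^(n+1−k)) · (ψ_{n+2} − 1). -/
theorem hanoi_inductive_identity (z : ℝ) (hz : 0 < z) (ψ : ℕ → ℝ)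
    (hψ1 : ψ 1 = (z + 1) / z)
    (hψ : ∀ k : ℕ, 1 ≤ k → ψ (k + 1) = ψ k ^ 2 - 3 * ψ k + 4) :
    ∀ n : ℕ, 1 ≤ n →
      (z ^ (3 ^ n) * (∏ k ∈ Finset.Icc 1 n, ψ k ^ (3 ^ (n - k))) * (ψ (n + 1) - 1)) ^ 3 +
          z ^ 3 * (z ^ (3 ^ n - 1) * ∏ k ∈ Finset.Icc 1 n, ψ k ^ (3 ^ (n - k))) ^ 3 =
        z ^ (3 ^ (n + 1)) * (∏ k ∈ Finset.Icc 1 (n + 1), ψ k ^ (3 ^ (n + 1 - k))) *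
          (ψ (n + 2) - 1) := by
  intro n hn
  have h1 : (1 : ℕ) ≤ 3 ^ n := Nat.one_le_pow _ _ (by norm_num)
  have e1 : (z ^ (3 ^ n)) ^ 3 = z ^ (3 ^ (n + 1)) := by
    rw [← pow_mul, ← pow_succ]
  have e2 : z * z ^ (3 ^ n - 1) = z ^ (3 ^ n) := by
    rw [← pow_succ']
    congr 1
    omega
  have hprod : ∏ k ∈ Finset.Icc 1 (n + 1), ψ k ^ (3 ^ (n + 1 - k)) =
      (∏ k ∈ Finset.Icc 1 n, ψ k ^ (3 ^ (n - k))) ^ 3 * ψ (n + 1) := by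
    rw [Finset.prod_Icc_succ_top (by omega : 1 ≤ n + 1)]
    congr 1
    · rw [← Finset.prod_pow]
      refine Finset.prod_congr rfl fun k hk => ?_
      rw [← pow_mul]
      congr 1
      have hk' := Finset.mem_Icc.mp hk
      have h : n + 1 - k = (n - k) + 1 := by omega
      rw [h, pow_succ]
    · simp
  have hψ2 : ψ (n + 2) = ψ (n + 1) ^ 2 - 3 * ψ (n + 1) + 4 := hψ (n + 1) (by omega)
  have e3 : z ^ 3 * (z ^ (3 ^ n - 1) * ∏ k ∈ Finset.Icc 1 n, ψ k ^ (3 ^ (n - k))) ^ 3 =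
      (z ^ (3 ^ n) * ∏ k ∈ Finset.Icc 1 n, ψ k ^ (3 ^ (n - k))) ^ 3 := by
    rw [← e2]; ring
  rw [hψ2, hprod, ← e1, e3]
  ring
end
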